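/- Let Γ be a finite simple graph on vertex set V with |V| = n, and let P be a polynomial in one variable t with integer coefficients such that for every natural number d, P evaluated at d equals the number of proper colorings f : V → Fin d of Γ (functions with f(u) ≠ f(v) for every edge {u,v}). Then the number of acyclic orientations of Γ satisfies a(Γ) = (−1)^n · P(−1). -/

import Mathlib

open Polynomial

/-- The graphical zonotope of `G`, as the Minkowski sum over the edges `{i,j}` of `G`
of the segments `[-(e_i - e_j), e_i - e_j]`, described via antisymmetric coefficient
functions supported on edges. -/
def graphicalZonotope {V : Type} [Fintype V] [DecidableEq V] (G : SimpleGraph V) :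
    Set (V → ℝ) :=
  { x | ∃ c : V → V → ℝ, (∀ u v, c u v = - c v u) ∧ (∀ u v, ¬ G.Adj u v → c u v = 0) ∧
      (∀ u v, |c u v| ≤ 1) ∧ x = fun w => ∑ u, c w u }

/-- `faceCount G k` is the number of nonempty exposed faces of the graphical zonotope of `G`
whose affine span has dimension `k`. -/
noncomputable def faceCount {V : Type} [Fintype V] [DecidableEq V] (G : SimpleGraph V)
    (k : ℕ) : ℕ :=
  Nat.card { F : Set (V → ℝ) // F.Nonempty ∧ IsExposed ℝ (graphicalZonotope G) F ∧
      Module.finrank ℝ (affineSpan ℝ F).direction = k }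

/-- The number of acyclic orientations of `G`. -/
noncomputable def acyclicOrientationCount {V : Type} (G : SimpleGraph V) : ℕ :=
  Nat.card { r : V → V → Prop // (∀ u v, r u v → G.Adj u v) ∧
      (∀ u v, G.Adj u v → Xor' (r u v) (r v u)) ∧ (∀ v, ¬ Relation.TransGen r v v) }

/-- rank of the induced subgraph on `s` : `|s| - #components`. -/
noncomputable def inducedRank {V : Type} (G : SimpleGraph V) (s : Set V) : ℕ :=
  Nat.card s - Nat.card (G.induce s).ConnectedComponent

/-- The `q`-analog of the chromatic polynomial evaluated at `d` colors, an element of `ℤ[q]`. -/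
noncomputable def chromQ {V : Type} [Fintype V] [DecidableEq V] (G : SimpleGraph V) (d : ℕ) : Polynomial ℤ :=
  ∑ f : V → Fin d, (X : Polynomial ℤ) ^ (∑ i : Fin d, inducedRank G (f ⁻¹' {i}))

/-- `H` is (the spanning subgraph determined by) a flat of `G`. -/
def IsFlatOf {V : Type} (G H : SimpleGraph V) : Prop :=
  H ≤ G ∧ ∀ u v, G.Adj u v → H.Reachable u v → H.Adj u v

/-- The rank of a spanning subgraph `H`: `|V| - c(H)`. -/
noncomputable def flatRank {V : Type} [Fintype V] (H : SimpleGraph V) : ℕ :=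
  Fintype.card V - Nat.card H.ConnectedComponent

/-- The contraction `G/H`: vertices are the connected components of `H`, two distinct
components being adjacent iff some edge of `G` joins them. -/
def contractFlat {V : Type} (G H : SimpleGraph V) : SimpleGraph H.ConnectedComponent where
  Adj C D := C ≠ D ∧ ∃ u v, G.Adj u v ∧ H.connectedComponentMk u = C ∧
      H.connectedComponentMk v = D
  symm := by
    constructor
    rintro C D ⟨hne, u, v, hadj, hu, hv⟩
    exact ⟨hne.symm, v, u, hadj.symm, hv, hu⟩
  loopless := by constructor; rintro C ⟨hne, -⟩; exact hne rfl

/-! Deletion–contraction. Fix an edge `xy` of `G`. Restricting an acyclic orientation of `G` to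
`G - xy` is onto, and an acyclic orientation of `G - xy` has two acyclic extensions exactly when it
has no directed path between `x` and `y`; those orientations are the pull-backs of the acyclic
orientations of `G / xy`. Hence `a G = a (G - xy) + a (G / xy)`, while for colorings
`χ (G - xy) = χ G + χ (G / xy)`, so both sides of the theorem satisfy the same recursion; on
edgeless graphs both equal `1`. -/

open Relation

namespace Relation

variable {α β : Type*} {r : α → α → Prop}

theorem transGen_or_of_transGen_insertEdge {a b c d : α}
    (h : TransGen (fun u v => r u v ∨ (u = a ∧ v = b)) c d) :
    TransGen r c d ∨ (ReflTransGen r c a ∧ ReflTransGen r b d) := by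
  induction h with
  | single h =>
    rcases h with h | ⟨rfl, rfl⟩
    · exact .inl (.single h)
    · exact .inr ⟨.refl, .refl⟩
  | tail _ h ih =>
    rcases h with h | ⟨rfl, rfl⟩ <;> rcases ih with ih | ⟨ih₁, ih₂⟩
    · exact .inl (ih.tail h)
    · exact .inr ⟨ih₁, ih₂.tail h⟩
    · exact .inr ⟨ih.to_reflTransGen, .refl⟩
    · exact .inr ⟨ih₁, .refl⟩

theorem not_transGen_self_insertEdge (hr : ∀ a, ¬ TransGen r a a) {a b : α} (hab : a ≠ b)
    (hba : ¬ TransGen r b a) :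
    ∀ c, ¬ TransGen (fun u v => r u v ∨ (u = a ∧ v = b)) c c := by
  intro c hc
  rcases transGen_or_of_transGen_insertEdge hc with h | ⟨hca, hbc⟩
  · exact hr c h
  · rcases reflTransGen_iff_eq_or_transGen.1 (hbc.trans hca) with h | h
    · exact hab h
    · exact hba h

theorem exists_transGen_of_transGen_map {f : α → β} {s : Set α}
    (hf : ∀ u v, f u = f v → u = v ∨ (u ∈ s ∧ v ∈ s)) {a b : β}
    (h : TransGen (Relation.Map r f f) a b) :
    ∃ u v, f u = a ∧ f v = b ∧
      (TransGen r u v ∨ ∃ m ∈ s, ∃ m' ∈ s, ReflTransGen r u m ∧ TransGen r m' v) := by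
  induction h with
  | single h =>
    obtain ⟨u, v, h, rfl, rfl⟩ := h
    exact ⟨u, v, rfl, rfl, .inl (.single h)⟩
  | tail _ h ih =>
    obtain ⟨u, v, rfl, hv, ih⟩ := ih
    obtain ⟨v', w, h, hv', rfl⟩ := h
    refine ⟨u, w, rfl, rfl, ?_⟩
    rcases hf v v' (hv.trans hv'.symm) with rfl | ⟨hv, hv'⟩ <;>
      rcases ih with ih | ⟨m, hm, m', hm', hum, hm'v⟩
    · exact .inl (ih.tail h)
    · exact .inr ⟨m, hm, m', hm', hum, hm'v.tail h⟩
    · exact .inr ⟨v, hv, v', hv', ih.to_reflTransGen, .single h⟩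
    · exact .inr ⟨m, hm, v', hv', hum, .single h⟩

theorem not_transGen_self_map {f : α → β} {s : Set α}
    (hf : ∀ u v, f u = f v → u = v ∨ (u ∈ s ∧ v ∈ s)) (hr : ∀ a, ¬ TransGen r a a)
    (hs : ∀ m ∈ s, ∀ m' ∈ s, ¬ TransGen r m m') :
    ∀ b, ¬ TransGen (Relation.Map r f f) b b := by
  intro a ha
  obtain ⟨u, v, hu, hv, h⟩ := exists_transGen_of_transGen_map hf ha
  rcases hf u v (hu.trans hv.symm) with rfl | ⟨hu, hv⟩ <;>
    rcases h with h | ⟨m, hm, m', hm', hum, hm'v⟩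
  · exact hr u h
  · exact hs m' hm' m hm (hm'v.trans_left hum)
  · exact hs u hu v hv h
  · exact hs m' hm' v hv hm'v

end Relation

theorem Polynomial.eq_of_eval_natCast_eq {R : Type*} [CommRing R] [IsDomain R] [CharZero R]
    {p q : R[X]} (h : ∀ n : ℕ, p.eval (n : R) = q.eval (n : R)) : p = q :=
  eq_of_infinite_eval_eq p q <| (Set.infinite_range_of_injective Nat.cast_injective).mono <| by
    rintro _ ⟨n, rfl⟩
    exact h n

theorem Nat.card_subtype_ne {α : Type*} [Finite α] (a : α) :
    Nat.card {x // x ≠ a} = Nat.card α - 1 := by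
  rw [← Set.ncard_singleton a, ← Set.ncard_compl]
  rfl

namespace SimpleGraph

section

variable {V C : Type*} {G H : SimpleGraph V} {x y : V} {r σ : V → V → Prop}

theorem deleteEdges_singleton_adj {u v : V} :
    (G.deleteEdges {s(x, y)}).Adj u v ↔ G.Adj u v ∧ s(u, v) ≠ s(x, y) := by
  simp

theorem deleteEdges_singleton_lt (hxy : G.Adj x y) : G.deleteEdges {s(x, y)} < G :=
  lt_of_le_of_ne (deleteEdges_le _) fun h => (deleteEdges_singleton_adj.1 (h ▸ hxy :)).2 rfl

section mergeVertex

variable (hne : x ≠ y)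

open Classical in
/-- `G.map (mergeVertex hne)` is the contraction `G / xy`, on the vertex set `V \ {y}`. -/
noncomputable def mergeVertex (v : V) : {v // v ≠ y} :=
  if h : v = y then ⟨x, hne⟩ else ⟨v, h⟩

theorem mergeVertex_coe (w : {v // v ≠ y}) : mergeVertex hne w = w :=
  dif_neg w.2

theorem mergeVertex_surjective : Function.Surjective (mergeVertex hne) :=
  fun w => ⟨w, mergeVertex_coe hne w⟩

theorem mergeVertex_eq_mergeVertex_iff {u v : V} :
    mergeVertex hne u = mergeVertex hne v ↔ u = v ∨ s(u, v) = s(x, y) := by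
  unfold mergeVertex
  grind [Sym2.eq_iff]

theorem mergeVertex_left : mergeVertex hne x = mergeVertex hne y :=
  (mergeVertex_eq_mergeVertex_iff hne).2 (.inr rfl)

theorem mergeVertex_eq_or_mem {u v : V} (h : mergeVertex hne u = mergeVertex hne v) :
    u = v ∨ (u ∈ ({x, y} : Set V) ∧ v ∈ ({x, y} : Set V)) := by
  rcases (mergeVertex_eq_mergeVertex_iff hne).1 h with h | h
  · exact .inl h
  · rcases Sym2.eq_iff.1 h with ⟨rfl, rfl⟩ | ⟨rfl, rfl⟩ <;> simp

theorem apply_coe_mergeVertex {f : V → C} (hf : f x = f y) (v : V) :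
    f (mergeVertex hne v) = f v := by
  unfold mergeVertex
  split_ifs with h
  · rw [hf, h]
  · rfl

theorem mergeVertex_ne_of_adj {u v : V} (h : (G.deleteEdges {s(x, y)}).Adj u v) :
    mergeVertex hne u ≠ mergeVertex hne v := by
  intro huv
  rcases (mergeVertex_eq_mergeVertex_iff hne).1 huv with huv | huv
  · exact h.ne huv
  · exact (deleteEdges_singleton_adj.1 h).2 huv

theorem map_mergeVertex_adj {a b : {v // v ≠ y}} :
    (G.map (mergeVertex hne)).Adj a b ↔
      Relation.Map (G.deleteEdges {s(x, y)}).Adj (mergeVertex hne) (mergeVertex hne) a b := by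
  constructor
  · rintro ⟨hab, u, v, h, rfl, rfl⟩
    refine ⟨u, v, deleteEdges_singleton_adj.2 ⟨h, fun he => hab ?_⟩, rfl, rfl⟩
    exact (mergeVertex_eq_mergeVertex_iff hne).2 (.inr he)
  · rintro ⟨u, v, h, rfl, rfl⟩
    exact ⟨mergeVertex_ne_of_adj hne h, u, v, (deleteEdges_singleton_adj.1 h).1, rfl, rfl⟩

end mergeVertex

def properColorings (G : SimpleGraph V) (C : Type*) : Set (V → C) :=
  {f | ∀ u v, G.Adj u v → f u ≠ f v}

theorem properColorings_bot : (⊥ : SimpleGraph V).properColorings C = Set.univ :=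
  Set.eq_univ_of_forall fun _ _ _ h => h.elim

theorem properColorings_deleteEdges_diff (hxy : G.Adj x y) :
    (G.deleteEdges {s(x, y)}).properColorings C \ {f | f x = f y} = G.properColorings C := by
  ext f
  simp only [properColorings, Set.mem_sdiff, Set.mem_ofPred_eq, deleteEdges_singleton_adj]
  constructor
  · rintro ⟨hf, hfxy⟩ u v huv
    by_cases he : s(u, v) = s(x, y)
    · rcases Sym2.eq_iff.1 he with ⟨rfl, rfl⟩ | ⟨rfl, rfl⟩
      · exact hfxy
      · exact Ne.symm hfxy
    · exact hf u v ⟨huv, he⟩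
  · exact fun hf => ⟨fun u v huv => hf u v huv.1, hf x y hxy⟩

theorem properColorings_deleteEdges_inter (hne : x ≠ y) :
    (G.deleteEdges {s(x, y)}).properColorings C ∩ {f | f x = f y} =
      (· ∘ mergeVertex hne) '' (G.map (mergeVertex hne)).properColorings C := by
  ext f
  constructor
  · rintro ⟨hf, hfxy : f x = f y⟩
    refine ⟨fun w => f w, ?_, funext (apply_coe_mergeVertex hne hfxy)⟩
    intro a b hab
    obtain ⟨u, v, huv, rfl, rfl⟩ := (map_mergeVertex_adj hne).1 hab
    simpa only [apply_coe_mergeVertex hne hfxy] using hf u v huv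
  · rintro ⟨g, hg, rfl⟩
    refine ⟨fun u v huv => hg _ _ ((map_mergeVertex_adj hne).2 ⟨u, v, huv, rfl, rfl⟩), ?_⟩
    exact congrArg g (mergeVertex_left hne)

theorem ncard_properColorings_deleteEdges [Finite V] [Finite C] (hxy : G.Adj x y) :
    ((G.deleteEdges {s(x, y)}).properColorings C).ncard =
      (G.properColorings C).ncard + ((G.map (mergeVertex hxy.ne)).properColorings C).ncard := by
  rw [← Set.ncard_inter_add_ncard_sdiff_eq_ncard _ {f | f x = f y},
    properColorings_deleteEdges_inter hxy.ne, properColorings_deleteEdges_diff hxy,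
    Set.ncard_image_of_injective _ (mergeVertex_surjective hxy.ne).injective_comp_right, add_comm]

structure IsAcyclicOrientation (G : SimpleGraph V) (r : V → V → Prop) : Prop where
  adj_of_rel ⦃u v : V⦄ : r u v → G.Adj u v
  rel_or_rel ⦃u v : V⦄ : G.Adj u v → r u v ∨ r v u
  not_transGen_self (v : V) : ¬ TransGen r v v

theorem IsAcyclicOrientation.asymm (hr : G.IsAcyclicOrientation r) {u v : V} (huv : r u v) :
    ¬ r v u :=
  fun hvu => hr.not_transGen_self u (.head huv (.single hvu))

theorem isAcyclicOrientation_bot_iff :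
    (⊥ : SimpleGraph V).IsAcyclicOrientation r ↔ r = ⊥ := by
  constructor
  · exact fun hr => funext₂ fun u v => propext ⟨(hr.adj_of_rel ·), False.elim⟩
  · rintro rfl
    refine ⟨fun _ _ => False.elim, fun _ _ => False.elim, fun v hv => ?_⟩
    obtain ⟨_, -, h⟩ := TransGen.tail'_iff.1 hv
    exact h

theorem IsAcyclicOrientation.restrict (hr : G.IsAcyclicOrientation r) (hH : H ≤ G) :
    H.IsAcyclicOrientation fun u v => r u v ∧ H.Adj u v where
  adj_of_rel _ _ h := h.2
  rel_or_rel _ _ h := (hr.rel_or_rel (hH h)).imp (⟨·, h⟩) (⟨·, h.symm⟩)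
  not_transGen_self v hv := hr.not_transGen_self v (TransGen.mono (fun _ _ h => h.1) _ _ hv)

theorem IsAcyclicOrientation.insertEdge (hσ : (G.deleteEdges {s(x, y)}).IsAcyclicOrientation σ)
    (hxy : G.Adj x y) (hyx : ¬ TransGen σ y x) :
    G.IsAcyclicOrientation fun u v => σ u v ∨ (u = x ∧ v = y) where
  adj_of_rel := by
    rintro u v (h | ⟨rfl, rfl⟩)
    · exact (deleteEdges_singleton_adj.1 (hσ.adj_of_rel h)).1
    · exact hxy
  rel_or_rel u v h := by
    by_cases he : s(u, v) = s(x, y)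
    · rcases Sym2.eq_iff.1 he with ⟨rfl, rfl⟩ | ⟨rfl, rfl⟩
      · exact .inl (.inr ⟨rfl, rfl⟩)
      · exact .inr (.inr ⟨rfl, rfl⟩)
    · exact (hσ.rel_or_rel (deleteEdges_singleton_adj.2 ⟨h, he⟩)).imp .inl .inl
  not_transGen_self :=
    Relation.not_transGen_self_insertEdge hσ.not_transGen_self hxy.ne hyx

def acyclicOrientationsDeleteEdgeEquiv (hxy : G.Adj x y) :
    {r // G.IsAcyclicOrientation r ∧ r x y} ≃
      {σ // (G.deleteEdges {s(x, y)}).IsAcyclicOrientation σ ∧ ¬ TransGen σ y x} where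
  toFun r := ⟨fun u v => r.1 u v ∧ (G.deleteEdges {s(x, y)}).Adj u v,
    r.2.1.restrict (deleteEdges_le _),
    fun h => r.2.1.not_transGen_self x (.head r.2.2 (TransGen.mono (fun _ _ h => h.1) _ _ h))⟩
  invFun σ := ⟨fun u v => σ.1 u v ∨ (u = x ∧ v = y), σ.2.1.insertEdge hxy σ.2.2,
    .inr ⟨rfl, rfl⟩⟩
  left_inv := by
    rintro ⟨r, hr, hrxy⟩
    refine Subtype.ext <| funext₂ fun u v => propext ⟨?_, fun h => ?_⟩
    · rintro (h | ⟨rfl, rfl⟩)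
      · exact h.1
      · exact hrxy
    · by_cases he : s(u, v) = s(x, y)
      · rcases Sym2.eq_iff.1 he with ⟨rfl, rfl⟩ | ⟨rfl, rfl⟩
        · exact .inr ⟨rfl, rfl⟩
        · exact (hr.asymm hrxy h).elim
      · exact .inl ⟨h, deleteEdges_singleton_adj.2 ⟨hr.adj_of_rel h, he⟩⟩
  right_inv := by
    rintro ⟨σ, hσ, hyx⟩
    refine Subtype.ext <| funext₂ fun u v =>
      propext ⟨?_, fun h => ⟨.inl h, hσ.adj_of_rel h⟩⟩
    rintro ⟨h | ⟨rfl, rfl⟩, hadj⟩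
    · exact h
    · exact (deleteEdges_singleton_adj.1 hadj).2 rfl |>.elim

theorem ncard_acyclicOrientations_eq_add [Finite V] (hxy : G.Adj x y) :
    {r | G.IsAcyclicOrientation r}.ncard =
      {σ | (G.deleteEdges {s(x, y)}).IsAcyclicOrientation σ}.ncard +
        {σ | (G.deleteEdges {s(x, y)}).IsAcyclicOrientation σ ∧
          ¬ TransGen σ x y ∧ ¬ TransGen σ y x}.ncard := by
  set G' := G.deleteEdges {s(x, y)}
  have hxy' : {r | G.IsAcyclicOrientation r ∧ r x y}.ncard =
      {σ | G'.IsAcyclicOrientation σ ∧ ¬ TransGen σ y x}.ncard :=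
    Nat.card_congr (acyclicOrientationsDeleteEdgeEquiv hxy)
  have hyx' : {r | G.IsAcyclicOrientation r ∧ r y x}.ncard =
      {σ | G'.IsAcyclicOrientation σ ∧ ¬ TransGen σ x y}.ncard := by
    have := Nat.card_congr (acyclicOrientationsDeleteEdgeEquiv hxy.symm)
    rwa [Sym2.eq_swap] at this
  have hsplit : {r | G.IsAcyclicOrientation r}.ncard =
      {r | G.IsAcyclicOrientation r ∧ r x y}.ncard +
        {r | G.IsAcyclicOrientation r ∧ r y x}.ncard := by
    rw [← Set.ncard_inter_add_ncard_sdiff_eq_ncard _ {r | r x y}]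
    congr 2
    ext r
    refine ⟨fun ⟨hr, hrxy⟩ => ⟨hr, (hr.rel_or_rel hxy).resolve_left hrxy⟩,
      fun ⟨hr, hryx⟩ => ⟨hr, hr.asymm hryx⟩⟩
  -- no orientation of `G'` has directed paths both ways between `x` and `y`
  have hunion := Set.ncard_union_add_ncard_inter
    {σ | G'.IsAcyclicOrientation σ ∧ ¬ TransGen σ y x}
    {σ | G'.IsAcyclicOrientation σ ∧ ¬ TransGen σ x y}
  rw [hsplit, hxy', hyx', ← hunion]
  congr 2
  · ext σ
    refine ⟨?_, fun hσ => ?_⟩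
    · rintro (⟨hσ, -⟩ | ⟨hσ, -⟩) <;> exact hσ
    · by_cases hyx : TransGen σ y x
      · exact .inr ⟨hσ, fun hxy => hσ.not_transGen_self x (hxy.trans hyx)⟩
      · exact .inl ⟨hσ, hyx⟩
  · ext σ
    simp only [Set.mem_inter_iff, Set.mem_ofPred_eq]
    tauto

section contract

variable (hne : x ≠ y)

theorem IsAcyclicOrientation.map_mergeVertex
    (hσ : (G.deleteEdges {s(x, y)}).IsAcyclicOrientation σ)
    (hxy : ¬ TransGen σ x y) (hyx : ¬ TransGen σ y x) :
    (G.map (mergeVertex hne)).IsAcyclicOrientation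
      (Relation.Map σ (mergeVertex hne) (mergeVertex hne)) where
  adj_of_rel := by
    rintro _ _ ⟨u, v, h, rfl, rfl⟩
    exact (map_mergeVertex_adj hne).2 ⟨u, v, hσ.adj_of_rel h, rfl, rfl⟩
  rel_or_rel a b h := by
    obtain ⟨u, v, hadj, rfl, rfl⟩ := (map_mergeVertex_adj hne).1 h
    exact (hσ.rel_or_rel hadj).imp (⟨u, v, ·, rfl, rfl⟩) (⟨v, u, ·, rfl, rfl⟩)
  not_transGen_self := by
    refine not_transGen_self_map (fun _ _ => mergeVertex_eq_or_mem hne) hσ.not_transGen_self ?_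
    simp only [Set.mem_insert_iff, Set.mem_singleton_iff]
    rintro _ (rfl | rfl) _ (rfl | rfl)
    exacts [hσ.not_transGen_self _, hxy, hyx, hσ.not_transGen_self _]

theorem IsAcyclicOrientation.comap_mergeVertex {τ : {v // v ≠ y} → {v // v ≠ y} → Prop}
    (hτ : (G.map (mergeVertex hne)).IsAcyclicOrientation τ) :
    let σ u v := τ (mergeVertex hne u) (mergeVertex hne v) ∧ (G.deleteEdges {s(x, y)}).Adj u v
    (G.deleteEdges {s(x, y)}).IsAcyclicOrientation σ ∧
      ¬ TransGen σ x y ∧ ¬ TransGen σ y x := by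
  intro σ
  have lift {u v : V} (h : TransGen σ u v) :
      TransGen τ (mergeVertex hne u) (mergeVertex hne v) :=
    TransGen.lift _ (fun _ _ h => h.1) _ _ h
  refine ⟨⟨fun _ _ h => h.2, fun u v h => ?_, fun v hv => hτ.not_transGen_self _ (lift hv)⟩,
    fun h => ?_, fun h => ?_⟩
  · exact (hτ.rel_or_rel ((map_mergeVertex_adj hne).2 ⟨u, v, h, rfl, rfl⟩)).imp
      (⟨·, h⟩) (⟨·, h.symm⟩)
  · exact hτ.not_transGen_self _ (mergeVertex_left hne ▸ lift h)
  · exact hτ.not_transGen_self _ (mergeVertex_left hne ▸ lift h)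

def acyclicOrientationsContractEquiv :
    {σ // (G.deleteEdges {s(x, y)}).IsAcyclicOrientation σ ∧
        ¬ TransGen σ x y ∧ ¬ TransGen σ y x} ≃
      {τ // (G.map (mergeVertex hne)).IsAcyclicOrientation τ} where
  toFun σ := ⟨Relation.Map σ.1 (mergeVertex hne) (mergeVertex hne),
    σ.2.1.map_mergeVertex hne σ.2.2.1 σ.2.2.2⟩
  invFun τ := ⟨_, τ.2.comap_mergeVertex hne⟩
  left_inv := by
    rintro ⟨σ, hσ, hxy, hyx⟩
    refine Subtype.ext <| funext₂ fun u v => propext ⟨fun ⟨hmap, hadj⟩ => ?_,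
      fun h => ⟨⟨u, v, h, rfl, rfl⟩, hσ.adj_of_rel h⟩⟩
    refine (hσ.rel_or_rel hadj).resolve_right fun hvu => ?_
    exact (hσ.map_mergeVertex hne hxy hyx).asymm hmap ⟨v, u, hvu, rfl, rfl⟩
  right_inv := by
    rintro ⟨τ, hτ⟩
    refine Subtype.ext <| funext₂ fun a b => propext ⟨?_, fun h => ?_⟩
    · rintro ⟨u, v, ⟨h, -⟩, rfl, rfl⟩
      exact h
    · obtain ⟨u, v, hadj, rfl, rfl⟩ := (map_mergeVertex_adj hne).1 (hτ.adj_of_rel h)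
      exact ⟨u, v, ⟨h, hadj⟩, rfl, rfl⟩

end contract

end

section

variable {V : Type} {G : SimpleGraph V}

theorem acyclicOrientationCount_eq_ncard :
    acyclicOrientationCount G = {r | G.IsAcyclicOrientation r}.ncard := by
  refine Nat.card_congr <| Equiv.subtypeEquivRight fun r => ⟨?_, fun hr => ?_⟩
  · rintro ⟨hadj, hxor, hacyc⟩
    exact ⟨fun u v => hadj u v, fun u v huv => (hxor u v huv).imp And.left And.left, hacyc⟩
  · refine ⟨fun u v => (hr.adj_of_rel ·), fun u v huv => ?_, hr.not_transGen_self⟩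
    rcases hr.rel_or_rel huv with h | h
    · exact .inl ⟨h, hr.asymm h⟩
    · exact .inr ⟨h, hr.asymm h⟩

theorem acyclicOrientationCount_bot : acyclicOrientationCount (⊥ : SimpleGraph V) = 1 := by
  simp [acyclicOrientationCount_eq_ncard, isAcyclicOrientation_bot_iff]

theorem acyclicOrientationCount_eq_add [Finite V] {x y : V} (hxy : G.Adj x y) :
    acyclicOrientationCount G = acyclicOrientationCount (G.deleteEdges {s(x, y)}) +
      acyclicOrientationCount (G.map (mergeVertex hxy.ne)) := by
  rw [acyclicOrientationCount_eq_ncard, acyclicOrientationCount_eq_ncard,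
    acyclicOrientationCount_eq_ncard, ncard_acyclicOrientations_eq_add hxy]
  exact congrArg _ (Nat.card_congr (acyclicOrientationsContractEquiv hxy.ne))

theorem exists_chromaticPolynomial_acyclicOrientationCount_eq (n : ℕ) {V : Type} [Finite V]
    (G : SimpleGraph V) (hn : Nat.card V = n) :
    ∃ P : ℤ[X], (∀ d : ℕ, P.eval (d : ℤ) = (G.properColorings (Fin d)).ncard) ∧
      (acyclicOrientationCount G : ℤ) = (-1) ^ n * P.eval (-1) := by
  induction n using Nat.strong_induction_on generalizing V with
  | _ n ihn =>
  induction G using WellFoundedLT.induction with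
  | _ G ihG =>
  by_cases hG : ∃ x y, G.Adj x y
  swap
  · obtain rfl : G = ⊥ := by
      ext u v
      simpa using not_exists.1 (not_exists.1 hG u) v
    refine ⟨X ^ n, fun d => ?_, ?_⟩
    · simp [properColorings_bot, Nat.card_fun, hn]
    · simp [acyclicOrientationCount_bot, ← pow_add, ← two_mul, pow_mul]
  obtain ⟨x, y, hxy⟩ := hG
  have : Nonempty V := ⟨x⟩
  obtain ⟨m, rfl⟩ := Nat.exists_eq_add_one_of_ne_zero (hn ▸ Nat.card_pos.ne')
  obtain ⟨P₁, hP₁, hA₁⟩ := ihG _ (deleteEdges_singleton_lt hxy)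
  obtain ⟨P₂, hP₂, hA₂⟩ := ihn m m.lt_add_one (G.map (mergeVertex hxy.ne))
    (by rw [Nat.card_subtype_ne, hn, Nat.add_sub_cancel])
  refine ⟨P₁ - P₂, fun d => ?_, ?_⟩
  · have := ncard_properColorings_deleteEdges (C := Fin d) hxy
    rw [eval_sub, hP₁, hP₂, this]
    push_cast
    ring
  · rw [acyclicOrientationCount_eq_add hxy]
    push_cast
    rw [hA₁, hA₂, eval_sub]
    ring

end

end SimpleGraph

theorem acyclicOrientationCount_eq_chromaticPolynomial_neg_one_general
    {V : Type} [Fintype V] (n : ℕ)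
    (G : SimpleGraph V) (hV : Fintype.card V = n)
    (P : Polynomial ℤ)
    (hP : ∀ d : ℕ, P.eval ((d : ℕ) : ℤ)
        = Nat.card { f : V → Fin d // ∀ u v, G.Adj u v → f u ≠ f v }) :
    (acyclicOrientationCount G : ℤ) = (-1 : ℤ) ^ n * P.eval (-1 : ℤ) := by
  obtain ⟨Q, hQ, hG⟩ := G.exists_chromaticPolynomial_acyclicOrientationCount_eq n
    (Nat.card_eq_fintype_card.trans hV)
  rwa [Polynomial.eq_of_eval_natCast_eq fun d => (hP d).trans (hQ d).symm]

/-- Stanley's theorem: `a(Γ) = (-1)^{|V|} χ(Γ, -1)`. -/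
theorem acyclicOrientationCount_eq_chromaticPolynomial_neg_one
    {V : Type} [Fintype V] [DecidableEq V] (n : ℕ)
    (G : SimpleGraph V) (hV : Fintype.card V = n)
    (P : Polynomial ℤ)
    (hP : ∀ d : ℕ, P.eval ((d : ℕ) : ℤ)
        = Nat.card { f : V → Fin d // ∀ u v, G.Adj u v → f u ≠ f v }) :
    (acyclicOrientationCount G : ℤ) = (-1 : ℤ) ^ n * P.eval (-1 : ℤ) :=
  acyclicOrientationCount_eq_chromaticPolynomial_neg_one_general n G hV P hP
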